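/- Let φ : H → ℝ be a smooth positive function on the hyperbolic upper half-plane, and define β := ∂_{z̄} log φ + 1/(z − z̄) and Φ := i(z − z̄)·∂_z log φ. Then the pair (β, Φ) satisfies the hyperbolic vortex equations (V1) and (V2) on H if and only if φ is harmonic, i.e. (∂_t² + ∂_r²)φ = 0; indeed, at each point z ∈ H each of the equations (V1) and (V2) holds at z if and only if (∂_t² + ∂_r²)φ(z) = 0. -/

import Mathlib

open Complex ComplexConjugate

noncomputable section

/-- Wirtinger derivative ∂_z f = (1/2)(∂_t f − i ∂_r f). -/
def wdz (f : ℂ → ℂ) (z : ℂ) : ℂ :=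
  (2:ℂ)⁻¹ * (fderiv ℝ f z 1 - Complex.I * fderiv ℝ f z Complex.I)

/-- Wirtinger derivative ∂_z̄ f = (1/2)(∂_t f + i ∂_r f). -/
def wdzbar (f : ℂ → ℂ) (z : ℂ) : ℂ :=
  (2:ℂ)⁻¹ * (fderiv ℝ f z 1 + Complex.I * fderiv ℝ f z Complex.I)

/-- A real-valued function regarded as complex-valued. -/
def cre (φ : ℂ → ℝ) : ℂ → ℂ := fun z => (φ z : ℂ)

/-- ∂_z log φ := (∂_z φ)/φ for positive real φ. -/
def dzlog (φ : ℂ → ℝ) (z : ℂ) : ℂ := wdz (cre φ) z / (φ z : ℂ)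

/-- ∂_z̄ log φ := (∂_z̄ φ)/φ for positive real φ. -/
def dzbarlog (φ : ℂ → ℝ) (z : ℂ) : ℂ := wdzbar (cre φ) z / (φ z : ℂ)

/-- Flat Laplacian ∂_t² + ∂_r² on ℂ ≅ ℝ², where z = t + ir. -/
def lap2 (φ : ℂ → ℝ) (z : ℂ) : ℝ :=
  fderiv ℝ (fun w => fderiv ℝ φ w 1) z 1 +
  fderiv ℝ (fun w => fderiv ℝ φ w Complex.I) z Complex.I

/-- The upper half-plane. -/
def H : Set ℂ := {z : ℂ | 0 < z.im}

/-- The connection coefficient β = ∂_z̄ log φ + 1/(z − z̄) of the vortex ansatz. -/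
def betaOf (φ : ℂ → ℝ) (z : ℂ) : ℂ := dzbarlog φ z + 1 / (z - conj z)

/-- The Higgs field Φ = i(z − z̄)·∂_z log φ of the vortex ansatz. -/
def higgsOf (φ : ℂ → ℝ) (z : ℂ) : ℂ := Complex.I * (z - conj z) * dzlog φ z

set_option maxHeartbeats 3200000

lemma fderiv_cre (φ : ℂ → ℝ) (w : ℂ) :
    fderiv ℝ (cre φ) w = Complex.ofRealCLM.comp (fderiv ℝ φ w) := by
  by_cases h : DifferentiableAt ℝ φ w
  · exact (Complex.ofRealCLM.hasFDerivAt.comp w h.hasFDerivAt).fderiv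
  · have h2 : ¬ DifferentiableAt ℝ (cre φ) w := by
      intro hc
      have := Complex.reCLM.differentiableAt.comp w hc
      have he : (⇑Complex.reCLM ∘ cre φ) = φ := by
        funext x; simp [cre, Function.comp]
      rw [he] at this; exact h this
    rw [fderiv_zero_of_not_differentiableAt h, fderiv_zero_of_not_differentiableAt h2]
    simp

lemma wdz_cre_eq (φ : ℂ → ℝ) :
    wdz (cre φ) = fun w => (2:ℂ)⁻¹ *
      (((fderiv ℝ φ w 1 : ℝ) : ℂ) - Complex.I * ((fderiv ℝ φ w Complex.I : ℝ) : ℂ)) := by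
  funext w; rw [wdz, fderiv_cre]; simp

lemma wdzbar_cre_eq (φ : ℂ → ℝ) :
    wdzbar (cre φ) = fun w => (2:ℂ)⁻¹ *
      (((fderiv ℝ φ w 1 : ℝ) : ℂ) + Complex.I * ((fderiv ℝ φ w Complex.I : ℝ) : ℂ)) := by
  funext w; rw [wdzbar, fderiv_cre]; simp

lemma hasFDerivAt_inv_comp {f : ℂ → ℂ} {f' : ℂ →L[ℝ] ℂ} {z : ℂ}
    (hf : HasFDerivAt f f' z) (h0 : f z ≠ 0) :
    HasFDerivAt (fun w => (f w)⁻¹) ((-(f z ^ 2)⁻¹ : ℂ) • f') z := by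
  have h := ((hasFDerivAt_inv h0).restrictScalars ℝ).comp z hf
  refine h.congr_fderiv ?_
  ext c
  simp [mul_comm]

lemma hasFDerivAt_div' {f g : ℂ → ℂ} {f' g' : ℂ →L[ℝ] ℂ} {z : ℂ}
    (hf : HasFDerivAt f f' z) (hg : HasFDerivAt g g' z) (h0 : g z ≠ 0) :
    HasFDerivAt (fun w => f w / g w)
      (((g z)⁻¹ : ℂ) • f' + (f z * (-(g z ^ 2)⁻¹) : ℂ) • g') z := by
  have h := hf.mul (hasFDerivAt_inv_comp hg h0)
  have e : (fun w => f w / g w) = fun w => f w * (g w)⁻¹ := by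
    funext w; rw [div_eq_mul_inv]
  rw [e]
  refine h.congr_fderiv ?_
  ext c
  simp [smul_smul]
  ring

lemma higgs_eq (φ : ℂ → ℝ) :
    higgsOf φ = fun w => (-2 : ℂ) * ((w.im : ℝ) : ℂ) * dzlog φ w := by
  funext w
  rw [higgsOf, Complex.sub_conj]
  push_cast
  ring_nf
  rw [Complex.I_sq]
  ring

lemma beta_eq (φ : ℂ → ℝ) :
    betaOf φ = fun w => wdzbar (cre φ) w / ((φ w : ℝ) : ℂ) +
      (-Complex.I) * ((2 : ℂ) * ((w.im : ℝ) : ℂ))⁻¹ := by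
  funext w
  rw [betaOf, dzbarlog, Complex.sub_conj]
  push_cast
  rw [one_div, mul_inv, mul_inv, Complex.inv_I]
  ring

lemma isOpenH : IsOpen H := isOpen_lt continuous_const Complex.continuous_im

lemma vortex_key (φ : ℂ → ℝ) (z : ℂ) (hz : 0 < z.im) (hp : 0 < φ z)
    (hcd : ContDiffAt ℝ (⊤ : ℕ∞) φ z) :
    (wdzbar (higgsOf φ) z + betaOf φ z * higgsOf φ z
      = -(((z.im : ℝ) : ℂ) * ((lap2 φ z : ℝ) : ℂ)) / (2 * ((φ z : ℝ) : ℂ))) ∧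
    (4 * z.im ^ 2 * (wdz (betaOf φ) z).re
      = 1 - Complex.normSq (higgsOf φ z) + z.im ^ 2 * lap2 φ z / φ z) := by
  have hd1 : DifferentiableAt ℝ φ z := hcd.differentiableAt (by simp)
  set D := fderiv ℝ φ z with hD_def
  have hD : HasFDerivAt φ D z := hd1.hasFDerivAt
  have hcd2 : ContDiffAt ℝ (⊤ : ℕ∞) (fderiv ℝ φ) z := hcd.fderiv_right (by simp)
  set F2 := fderiv ℝ (fderiv ℝ φ) z with hF2_def
  have hF2 : HasFDerivAt (fderiv ℝ φ) F2 z := (hcd2.differentiableAt (by simp)).hasFDerivAt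
  have hsymm' : F2 Complex.I 1 = F2 1 Complex.I :=
    (hcd.isSymmSndFDerivAt (by rw [minSmoothness_of_isRCLikeNormedField]; exact WithTop.coe_le_coe.mpr le_top) Complex.I 1)
  set P' : ℂ →L[ℝ] ℂ :=
    Complex.ofRealCLM.comp ((ContinuousLinearMap.apply ℝ ℝ (1:ℂ)).comp F2) with hP'_def
  set Q' : ℂ →L[ℝ] ℂ :=
    Complex.ofRealCLM.comp ((ContinuousLinearMap.apply ℝ ℝ Complex.I).comp F2) with hQ'_def
  have hP : HasFDerivAt (fun w => ((fderiv ℝ φ w (1:ℂ) : ℝ) : ℂ)) P' z :=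
    Complex.ofRealCLM.hasFDerivAt.comp z
      ((ContinuousLinearMap.apply ℝ ℝ (1:ℂ)).hasFDerivAt.comp z hF2)
  have hQ : HasFDerivAt (fun w => ((fderiv ℝ φ w Complex.I : ℝ) : ℂ)) Q' z :=
    Complex.ofRealCLM.hasFDerivAt.comp z
      ((ContinuousLinearMap.apply ℝ ℝ Complex.I).hasFDerivAt.comp z hF2)
  have hcre : HasFDerivAt (cre φ) (Complex.ofRealCLM.comp D) z :=
    Complex.ofRealCLM.hasFDerivAt.comp z hD
  set G' : ℂ →L[ℝ] ℂ := (2:ℂ)⁻¹ • (P' - Complex.I • Q') with hG'_def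
  set Gb' : ℂ →L[ℝ] ℂ := (2:ℂ)⁻¹ • (P' + Complex.I • Q') with hGb'_def
  have hG : HasFDerivAt (wdz (cre φ)) G' z := by
    rw [wdz_cre_eq]
    exact ((hP.sub (hQ.const_mul Complex.I)).const_mul ((2:ℂ)⁻¹))
  have hGb : HasFDerivAt (wdzbar (cre φ)) Gb' z := by
    rw [wdzbar_cre_eq]
    exact ((hP.add (hQ.const_mul Complex.I)).const_mul ((2:ℂ)⁻¹))
  have hpne : ((φ z : ℝ) : ℂ) ≠ 0 := by exact_mod_cast ne_of_gt hp
  set DL' : ℂ →L[ℝ] ℂ := (((φ z : ℂ))⁻¹ : ℂ) • G' +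
      (wdz (cre φ) z * (-(((φ z : ℂ)) ^ 2)⁻¹) : ℂ) • (Complex.ofRealCLM.comp D) with hDL'_def
  have hdl : HasFDerivAt (dzlog φ) DL' z := by
    unfold dzlog
    exact hasFDerivAt_div' hG hcre hpne
  have him : HasFDerivAt (fun w : ℂ => ((w.im : ℝ) : ℂ))
      (Complex.ofRealCLM.comp Complex.imCLM) z :=
    (Complex.ofRealCLM.comp Complex.imCLM).hasFDerivAt
  set M' : ℂ →L[ℝ] ℂ := (-2 : ℂ) • (Complex.ofRealCLM.comp Complex.imCLM) with hM'_def
  have hM : HasFDerivAt (fun w : ℂ => (-2 : ℂ) * ((w.im : ℝ) : ℂ)) M' z :=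
    him.const_mul (-2)
  set EH : ℂ →L[ℝ] ℂ :=
    ((-2 : ℂ) * ((z.im : ℝ) : ℂ)) • DL' + (dzlog φ z) • M' with hEH_def
  have hHig : HasFDerivAt (higgsOf φ) EH z := by
    rw [higgs_eq]
    exact hM.mul hdl
  have hrne : ((2:ℂ) * ((z.im : ℝ) : ℂ)) ≠ 0 := by
    simp [Complex.ofReal_ne_zero, ne_of_gt hz]
  set N' : ℂ →L[ℝ] ℂ := (-Complex.I) •
      ((-(((2:ℂ) * ((z.im : ℝ) : ℂ)) ^ 2)⁻¹ : ℂ) •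
        ((2:ℂ) • (Complex.ofRealCLM.comp Complex.imCLM))) with hN'_def
  have hN : HasFDerivAt
      (fun w : ℂ => (-Complex.I) * ((2 : ℂ) * ((w.im : ℝ) : ℂ))⁻¹) N' z :=
    (hasFDerivAt_inv_comp (him.const_mul 2) hrne).const_mul (-Complex.I)
  set EB : ℂ →L[ℝ] ℂ :=
    ((((φ z : ℂ))⁻¹ : ℂ) • Gb' +
      (wdzbar (cre φ) z * (-(((φ z : ℂ)) ^ 2)⁻¹) : ℂ) • (Complex.ofRealCLM.comp D)) + N'
      with hEB_def
  have hBet : HasFDerivAt (betaOf φ) EB z := by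
    rw [beta_eq]
    exact (hasFDerivAt_div' hGb hcre hpne).add hN
  set u := D 1 with hu_def
  set v := D Complex.I with hv_def
  have hwz : wdz (cre φ) z = (2:ℂ)⁻¹ * ((u:ℂ) - Complex.I*(v:ℂ)) := by
    simp [wdz_cre_eq, hu_def, hv_def, hD_def]
  have hwbz : wdzbar (cre φ) z = (2:ℂ)⁻¹ * ((u:ℂ) + Complex.I*(v:ℂ)) := by
    simp [wdzbar_cre_eq, hu_def, hv_def, hD_def]
  have hlap : lap2 φ z = F2 1 1 + F2 Complex.I Complex.I := by
    have hU : HasFDerivAt (fun w => fderiv ℝ φ w (1:ℂ))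
        ((ContinuousLinearMap.apply ℝ ℝ (1:ℂ)).comp F2) z :=
      (ContinuousLinearMap.apply ℝ ℝ (1:ℂ)).hasFDerivAt.comp z hF2
    have hV : HasFDerivAt (fun w => fderiv ℝ φ w Complex.I)
        ((ContinuousLinearMap.apply ℝ ℝ Complex.I).comp F2) z :=
      (ContinuousLinearMap.apply ℝ ℝ Complex.I).hasFDerivAt.comp z hF2
    rw [lap2, hU.fderiv, hV.fderiv]
    simp
  have hrC : ((z.im:ℝ):ℂ) ≠ 0 := by exact_mod_cast ne_of_gt hz
  have i2 : (Complex.I:ℂ)^2 = -1 := Complex.I_sq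
  constructor
  · rw [wdzbar, hHig.fderiv, hlap]
    rw [show betaOf φ z = wdzbar (cre φ) z / ((φ z : ℝ) : ℂ) +
      (-Complex.I) * ((2 : ℂ) * ((z.im : ℝ) : ℂ))⁻¹ from by rw [beta_eq]]
    rw [show higgsOf φ z = (-2 : ℂ) * ((z.im : ℝ) : ℂ) * dzlog φ z from by rw [higgs_eq]]
    simp only [hEH_def, hDL'_def, hM'_def, hG'_def, hP'_def, hQ'_def,
      ContinuousLinearMap.add_apply, ContinuousLinearMap.smul_apply,
      ContinuousLinearMap.comp_apply, ContinuousLinearMap.sub_apply,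
      ContinuousLinearMap.apply_apply, smul_eq_mul, hwz, hwbz, dzlog, hsymm',
      Complex.ofRealCLM_apply, Complex.imCLM_apply, Complex.I_im, Complex.one_im,
      Complex.ofReal_zero, Complex.ofReal_one, mul_zero, zero_mul, mul_one, add_zero,
      Complex.ofReal_add]
    field_simp [hpne, hrC]
    ring_nf
    simp only [i2]
    ring_nf
    field_simp [hpne, hrC]
    ring
  · have hwb : wdz (betaOf φ) z =
        (((F2 1 1 + F2 Complex.I Complex.I) / (4 * φ z)
          - (u^2 + v^2) / (4 * (φ z)^2) + 1 / (4 * z.im^2) : ℝ) : ℂ) := by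
      rw [wdz, hBet.fderiv]
      simp only [hEB_def, hN'_def, hGb'_def, hP'_def, hQ'_def,
        ContinuousLinearMap.add_apply, ContinuousLinearMap.smul_apply,
        ContinuousLinearMap.comp_apply, ContinuousLinearMap.sub_apply,
        ContinuousLinearMap.apply_apply, smul_eq_mul, hwbz, hsymm',
        Complex.ofRealCLM_apply, Complex.imCLM_apply, Complex.I_im, Complex.one_im,
        Complex.ofReal_zero, Complex.ofReal_one, mul_zero, zero_mul, mul_one, add_zero,
        Complex.ofReal_add]
      push_cast
      field_simp [hpne, hrC]
      ring_nf
      simp only [i2]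
      ring_nf
      have c6 : (((φ z : ℝ):ℂ))⁻¹ ^ 6 * (((z.im : ℝ):ℂ))⁻¹ ^ 2 *
          (((φ z : ℝ):ℂ)) ^ 6 * (((z.im : ℝ):ℂ)) ^ 2 = 1 := by
        field_simp
      simp only [← hv_def]
      ring
    have hnorm : Complex.normSq (higgsOf φ z) = z.im^2 * (u^2 + v^2) / (φ z)^2 := by
      have hHz : higgsOf φ z = ((-(z.im * u) / φ z : ℝ) : ℂ) +
          ((z.im * v / φ z : ℝ) : ℂ) * Complex.I := by
        rw [show higgsOf φ z = (-2 : ℂ) * ((z.im : ℝ) : ℂ) * dzlog φ z from by rw [higgs_eq]]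
        rw [dzlog, hwz]
        push_cast
        field_simp [hpne]
        ring
      rw [hHz, Complex.normSq_add_mul_I]
      field_simp [ne_of_gt hp]
    rw [hwb, Complex.ofReal_re, hnorm, hlap]
    field_simp [ne_of_gt hp, ne_of_gt hz]
    ring

lemma vortex_iff (φ : ℂ → ℝ) (z : ℂ) (hz : z ∈ H) (hp : 0 < φ z)
    (hcd : ContDiffAt ℝ (⊤ : ℕ∞) φ z) :
    ((wdzbar (higgsOf φ) z + betaOf φ z * higgsOf φ z = 0) ↔ lap2 φ z = 0) ∧
    ((4 * z.im^2 * (wdz (betaOf φ) z).re = 1 - Complex.normSq (higgsOf φ z)) ↔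
      lap2 φ z = 0) := by
  have hz' : 0 < z.im := hz
  obtain ⟨k1, k2⟩ := vortex_key φ z hz' hp hcd
  constructor
  · rw [k1]
    simp [div_eq_zero_iff, Complex.ofReal_eq_zero, ne_of_gt hz', ne_of_gt hp]
  · rw [k2]
    rw [add_eq_left]
    rw [div_eq_zero_iff]
    simp [ne_of_gt hz', ne_of_gt hp, pow_eq_zero_iff]

/-- For a smooth positive super-potential φ on the hyperbolic upper half-plane, the pair
(β, Φ) = (∂_z̄ log φ + 1/(z − z̄), i(z − z̄)∂_z log φ) satisfies each of the hyperbolic vortex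
equations (V1) ∂_z̄Φ + βΦ = 0 and (V2) 4r²·Re(∂_z β) = 1 − |Φ|² at a point z ∈ H iff
(∂_t² + ∂_r²)φ(z) = 0; in particular both hold on H iff φ is harmonic. -/
theorem vortex_ansatz_iff_harmonic (φ : ℂ → ℝ)
    (hφ : ContDiffOn ℝ (⊤ : ℕ∞) φ H) (hpos : ∀ z ∈ H, 0 < φ z) :
    (∀ z ∈ H,
      ((wdzbar (higgsOf φ) z + betaOf φ z * higgsOf φ z = 0) ↔ lap2 φ z = 0) ∧
      ((4 * z.im^2 * (wdz (betaOf φ) z).re = 1 - Complex.normSq (higgsOf φ z)) ↔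
        lap2 φ z = 0)) ∧
    ((∀ z ∈ H,
        wdzbar (higgsOf φ) z + betaOf φ z * higgsOf φ z = 0 ∧
        4 * z.im^2 * (wdz (betaOf φ) z).re = 1 - Complex.normSq (higgsOf φ z)) ↔
      (∀ z ∈ H, lap2 φ z = 0)) := by
  have hiff := fun (z : ℂ) (hz : z ∈ H) => vortex_iff φ z hz (hpos z hz)
    ((hφ.contDiffAt (isOpenH.mem_nhds hz)))
  refine ⟨hiff, ?_⟩
  constructor
  · intro h z hz
    exact ((hiff z hz).1).mp (h z hz).1
  · intro h z hz
    exact ⟨((hiff z hz).1).mpr (h z hz), ((hiff z hz).2).mpr (h z hz)⟩
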